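/- For every n ≥ 1, the formula φ_n is provable in natural deduction for M→, i.e., there is a derivation of φ_n with no open assumptions. -/

import Mathlib

/-- Formulas of purely implicational logic, built from atoms (numbered by `ℕ`)
by the single connective `→` (`impl`). -/
inductive Fm : Type
  | atom : ℕ → Fm
  | impl : Fm → Fm → Fm
deriving DecidableEq

/-- χ[X,Y] = (((X → Y) → X) → X) → Y. -/
def chi (X Y : Fm) : Fm := (((X.impl Y).impl X).impl X).impl Y

/-- The atom `Fm.atom 0` is C, and `Fm.atom k` is D_k for k ≥ 1.
ξ₁ = χ[D₁, C] and ξ_{i+1} = χ[D_{i+1}, ξ_i]  (the value at 0 is irrelevant). -/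
def xi : ℕ → Fm
  | 0 => chi (.atom 1) (.atom 0)
  | 1 => chi (.atom 1) (.atom 0)
  | n + 2 => chi (.atom (n + 2)) (xi (n + 1))

/-- φ_n = ξ_n → C. -/
def phi (n : ℕ) : Fm := (xi n).impl (.atom 0)

/-- Natural deduction derivations for M→, indexed by the multiset of open
assumption occurrences and the conclusion.  `assume a` is a one-occurrence
assumption of `a`; `intro n` is →-introduction discharging exactly `n`
occurrences of the assumption `a`; `elim` is →-elimination whose second
peirceX (the implication) is the major peirceX. -/
inductive Deriv : Multiset Fm → Fm → Type
  | assume (a : Fm) : Deriv {a} a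
  | intro {Γ : Multiset Fm} {a b : Fm} (n : ℕ)
      (d : Deriv (Γ + Multiset.replicate n a) b) : Deriv Γ (a.impl b)
  | elim {Γ Δ : Multiset Fm} {a b : Fm}
      (minor : Deriv Γ a) (major : Deriv Δ (a.impl b)) : Deriv (Γ + Δ) b

/-- The last rule of the derivation is an →-introduction. -/
def Deriv.isIntro : ∀ {Γ b}, Deriv Γ b → Prop
  | _, _, .intro _ _ => True
  | _, _, _ => False

/-- A derivation is normal if no formula occurrence is both the conclusion of
an →-introduction and the major peirceX of an →-elimination. -/
def Deriv.normal : ∀ {Γ b}, Deriv Γ b → Prop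
  | _, _, .assume _ => True
  | _, _, .intro _ d => d.normal
  | _, _, .elim minor major => minor.normal ∧ major.normal ∧ ¬ major.isIntro

/-!
Every χ[X,Y] implies Y, by the closed term `λh. h (λq. q (λd. h (λ_. d)))`, which uses its
assumption h : χ[X,Y] twice. Since ξ_{i+1} = χ[D_{i+1}, ξ_i], this gives ⊢ ξ_{i+1} → ξ_i, and
chaining these implications down to ξ₁ → C = φ₁ yields ⊢ ξ_n → C.
-/

namespace Deriv

def cast {Γ Γ' : Multiset Fm} (h : Γ = Γ') {b : Fm} (d : Deriv Γ b) : Deriv Γ' b := h ▸ d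

def introVacuous {Γ : Multiset Fm} (a : Fm) {b : Fm} (d : Deriv Γ b) : Deriv Γ (a.impl b) :=
  .intro 0 (d.cast (add_zero Γ).symm)

def intro₁ {Γ : Multiset Fm} {a b : Fm} (d : Deriv (Γ + {a}) b) : Deriv Γ (a.impl b) :=
  .intro 1 d

def comp {Γ Δ : Multiset Fm} {a b e : Fm} (f : Deriv Γ (a.impl b)) (g : Deriv Δ (b.impl e)) :
    Deriv (Γ + Δ) (a.impl e) :=
  intro₁ ((elim (elim (assume a) f) g).cast (by rw [add_assoc, add_comm]))

def chiImpl (X Y : Fm) : Deriv 0 ((chi X Y).impl Y) :=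
  let h := chi X Y
  let impXY : Deriv {h} (X.impl Y) :=
    intro₁ ((elim (introVacuous ((X.impl Y).impl X) (assume X)) (assume h)).cast (add_comm _ _))
  let peirceX : Deriv {h} (((X.impl Y).impl X).impl X) := intro₁ (elim impXY (assume _))
  .intro 2 ((elim peirceX (assume h)).cast (zero_add _).symm)

end Deriv

def phiDeriv : (n : ℕ) → Deriv 0 (phi n)
  | 0 | 1 => Deriv.chiImpl (.atom 1) (.atom 0)
  | n + 2 => (Deriv.chiImpl (.atom (n + 2)) (xi (n + 1))).comp (phiDeriv (n + 1))

theorem phi_provable_general (n : ℕ) :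
    Nonempty (Deriv (0 : Multiset Fm) (phi n)) :=
  ⟨phiDeriv n⟩

/-- for every n ≥ 1, φ_n is provable in natural deduction for
M→, i.e. there is a derivation of φ_n with no open assumptions. -/
theorem phi_provable (n : ℕ) (hn : 1 ≤ n) :
    Nonempty (Deriv (0 : Multiset Fm) (phi n)) :=
  phi_provable_general n
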